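/- arXiv:math/0509395 — 3 statements merged into one kernel-verified Lean document; each statement's English description precedes it below -/
import Mathlib

section
/- If a metric space (X,d) is uniformly locally trace equi-connected at a subset X₀ ⊂ X, then X is uniformly locally chain equi-connected at X₀. -/
/-- A continuity modulus: a nondecreasing `ω : (0,∞) → (0,∞)` with `ω(t) → 0` as `t → 0⁺`. -/
def ContinuityModulus (ω : ℝ → ℝ) : Prop :=
  MonotoneOn ω (Set.Ioi 0) ∧ (∀ t : ℝ, 0 < t → 0 < ω t) ∧
    Filter.Tendsto ω (nhdsWithin 0 (Set.Ioi 0)) (nhds 0)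

/-- `c` is an `η`-chain of length `l` linking `x` and `y`. -/
def IsEtaChain {X : Type*} [MetricSpace X] (η : ℝ) (l : ℕ)
    (c : Fin (l + 1) → X) (x y : X) : Prop :=
  c 0 = x ∧ c (Fin.last l) = y ∧ ∀ i : Fin l, dist (c i.castSucc) (c i.succ) < η

/-- `X` is uniformly locally chain equi-connected at `X₀`. -/
def ULChainEquiConnectedAt {X : Type*} [MetricSpace X] (X₀ : Set X) : Prop :=
  ∀ ε : ℝ, 0 < ε → ∃ δ : ℝ, 0 < δ ∧ ∀ η : ℝ, 0 < η → ∃ l : ℕ,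
    ∀ x ∈ X₀, ∀ y ∈ X₀, dist x y < δ →
      ∃ l' : ℕ, l' ≤ l ∧ ∃ c : Fin (l' + 1) → X, IsEtaChain η l' c x y ∧
        ∀ i j : Fin (l' + 1), dist (c i) (c j) < ε

/-- `f` restricted to `Q` has continuity modulus at most `ω`. -/
def ModulusLE {X : Type*} [MetricSpace X] (ω : ℝ → ℝ) (Q : Set ℝ) (f : ℝ → X) : Prop :=
  ∀ q ∈ Q, ∀ q' ∈ Q, ∀ t : ℝ, 0 < t → |q - q'| ≤ t → dist (f q) (f q') ≤ ω t

/-- `X` is uniformly locally trace equi-connected at `X₀`. -/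
def ULTraceEquiConnectedAt {X : Type*} [MetricSpace X] (X₀ : Set X) : Prop :=
  ∃ ε₀ : ℝ, 0 < ε₀ ∧ ∃ ω : ℝ → ℝ, ContinuityModulus ω ∧
    ∀ x ∈ X₀, ∀ y ∈ X₀, dist x y < ε₀ →
      ∀ Q : Set ℝ, Q.Countable → Q ⊆ Set.Icc 0 (dist x y) →
        Set.Icc 0 (dist x y) ⊆ closure Q → 0 ∈ Q → dist x y ∈ Q →
        ∃ f : ℝ → X, f 0 = x ∧ f (dist x y) = y ∧ ModulusLE ω Q f

/-!
Given `ε`, choose `δ < ε₀` with `ω δ < ε`; given `η`, choose `s` with `ω s < η` and `N > δ / s`.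
For `d = dist x y < δ`, apply trace connectedness to a countable dense `Q ⊆ [0, d]` containing the
grid `k d / N`, `k ≤ N`: the values of the trace `f` on the grid form an `η`-chain of length `N`
(grid steps are `≤ s`), and all of them lie within `ω δ < ε` of each other (`Q` has diameter `≤ δ`).
-/

open Set Filter Topology TopologicalSpace

lemma exists_mem_Ioo_lt_of_tendsto_nhdsGT_zero {ω : ℝ → ℝ} (hω : Tendsto ω (𝓝[>] 0) (𝓝 0))
    {ε r : ℝ} (hε : 0 < ε) (hr : 0 < r) : ∃ t ∈ Ioo 0 r, ω t < ε :=
  (Eventually.and (Ioo_mem_nhdsGT hr) (hω.eventually (gt_mem_nhds hε))).exists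

lemma TopologicalSpace.IsSeparable.exists_countable_dense_subset_superset {Y : Type*}
    [TopologicalSpace Y] [PseudoMetrizableSpace Y] {s T : Set Y} (hs : IsSeparable s)
    (hT : T.Countable) (hTs : T ⊆ s) : ∃ Q, T ⊆ Q ∧ Q ⊆ s ∧ Q.Countable ∧ s ⊆ closure Q := by
  obtain ⟨D, hDs, hDc, hsD⟩ := hs.exists_countable_dense_subset
  exact ⟨T ∪ D, subset_union_left, union_subset hTs hDs, hT.union hDc,
    hsD.trans (closure_mono subset_union_right)⟩

lemma natCast_mul_div_mem_Icc {d : ℝ} (hd : 0 ≤ d) {k N : ℕ} (hk : k ≤ N) :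
    (k : ℝ) * d / N ∈ Icc 0 d := by
  rcases Nat.eq_zero_or_pos N with rfl | hN
  · simp [hd]
  · refine ⟨by positivity, (div_le_iff₀ (by positivity)).2 ?_⟩
    rw [mul_comm d]
    exact mul_le_mul_of_nonneg_right (by exact_mod_cast hk) hd

namespace ModulusLE

variable {X : Type*} [MetricSpace X] {ω : ℝ → ℝ} {Q : Set ℝ} {f : ℝ → X}

lemma dist_lt_of_subset_Icc (hf : ModulusLE ω Q f) {a b r ε : ℝ} (hQ : Q ⊆ Icc a b)
    (hr : 0 < r) (hab : b - a ≤ r) (hε : ω r < ε) {q q' : ℝ} (hq : q ∈ Q) (hq' : q' ∈ Q) :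
    dist (f q) (f q') < ε :=
  (hf q hq q' hq' r hr ((Real.dist_le_of_mem_Icc (hQ hq) (hQ hq')).trans hab)).trans_lt hε

lemma isEtaChain_grid (hf : ModulusLE ω Q f) {d s η : ℝ} {N : ℕ} (hN : N ≠ 0)
    (hgrid : ∀ k : Fin (N + 1), (k : ℕ) * d / N ∈ Q) (hd : 0 ≤ d) (hs : 0 < s)
    (hstep : d / N ≤ s) (hη : ω s < η) :
    IsEtaChain η N (fun k => f ((k : ℕ) * d / N)) (f 0) (f d) := by
  refine ⟨by simp, by simp [hN], fun i => ?_⟩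
  have hgap : |(i.castSucc : ℕ) * d / N - (i.succ : ℕ) * d / N| = d / N := by
    rw [Fin.val_castSucc, Fin.val_succ, Nat.cast_succ, ← sub_div, abs_div, Nat.abs_cast,
      show (i : ℝ) * d - (i + 1) * d = -d by ring, abs_neg, abs_of_nonneg hd]
  exact (hf _ (hgrid _) _ (hgrid _) s hs (hgap.trans_le hstep)).trans_lt hη

end ModulusLE

/-- Uniform local trace equi-connectedness at `X₀` implies uniform local chain
equi-connectedness at `X₀`. -/
theorem ultec_implies_ulcec {X : Type*} [MetricSpace X] (X₀ : Set X)
    (h : ULTraceEquiConnectedAt X₀) : ULChainEquiConnectedAt X₀ := by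
  obtain ⟨ε₀, hε₀, ω, ⟨-, -, hω⟩, htrace⟩ := h
  intro ε hε
  obtain ⟨δ, ⟨hδ, hδε₀⟩, hωδ⟩ := exists_mem_Ioo_lt_of_tendsto_nhdsGT_zero hω hε hε₀
  refine ⟨δ, hδ, fun η hη => ?_⟩
  obtain ⟨s, ⟨hs, -⟩, hωs⟩ := exists_mem_Ioo_lt_of_tendsto_nhdsGT_zero hω hη one_pos
  obtain ⟨N, hN⟩ := exists_nat_gt (δ / s)
  have hNpos : (0 : ℝ) < N := (div_pos hδ hs).trans hN
  refine ⟨N, fun x hx y hy hxy => ⟨N, le_rfl, ?_⟩⟩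
  set d := dist x y
  obtain ⟨Q, hgridQ, hQd, hQc, hQdense⟩ :=
    (IsSeparable.of_separableSpace (Icc 0 d)).exists_countable_dense_subset_superset
      (countable_range fun k : Fin (N + 1) => (k : ℕ) * d / N)
      (range_subset_iff.2 fun k => natCast_mul_div_mem_Icc dist_nonneg k.is_le)
  have hgrid : ∀ k : Fin (N + 1), (k : ℕ) * d / N ∈ Q := fun k => hgridQ (mem_range_self k)
  have hN0 : N ≠ 0 := by exact_mod_cast hNpos.ne'
  obtain ⟨f, hf0, hfd, hf⟩ := htrace x hx y hy (hxy.trans hδε₀) Q hQc hQd hQdense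
    (by simpa using hgrid 0) (by simpa [hN0] using hgrid (Fin.last N))
  have hstep : d / N ≤ s := (div_le_iff₀ hNpos).2 (by linarith [(div_lt_iff₀ hs).1 hN])
  refine ⟨_, hf0 ▸ hfd ▸ hf.isEtaChain_grid hN0 hgrid dist_nonneg hs hstep hωs,
    fun i j => hf.dist_lt_of_subset_Icc hQd hδ (by linarith) hωδ (hgrid i) (hgrid j)⟩
end

section
/- A metric space (X,d) is uniformly locally chain equi-connected provided X is chain connected im kleinen and there exists a continuity modulus ω such that the metric d is ω-convex on each chain connected component of X. -/
/-- `x` and `y` can be linked by an `η`-chain for every `η > 0`. -/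
def ChainLinked {X : Type*} [MetricSpace X] (x y : X) : Prop :=
  ∀ η : ℝ, 0 < η → ∃ l : ℕ, ∃ c : Fin (l + 1) → X, IsEtaChain η l c x y

/-- The chain connected component of a point. -/
def ChainComponent {X : Type*} [MetricSpace X] (x₀ : X) : Set X :=
  {x : X | ChainLinked x₀ x}

/-- The metric is `ω`-convex on a set `C`. -/
def OmegaConvexOn {X : Type*} [MetricSpace X] (ω : ℝ → ℝ) (C : Set X) : Prop :=
  ∀ x ∈ C, ∀ y ∈ C, ∀ s t : ℝ, 0 < s → 0 < t → dist x y < ω (s + t) →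
    ∃ z ∈ C, dist x z < ω s ∧ dist z y < ω t

/-- `X` is chain connected im kleinen. -/
def ChainConnectedImKleinen (X : Type*) [MetricSpace X] : Prop :=
  ∃ ε : ℝ, 0 < ε ∧ ∀ x y : X, dist x y < ε → ChainLinked x y

/-- `X` is uniformly locally chain equi-connected. -/
def ULChainEquiConnected (X : Type*) [MetricSpace X] : Prop :=
  ∀ ε : ℝ, 0 < ε → ∃ δ : ℝ, 0 < δ ∧ ∀ η : ℝ, 0 < η → ∃ l : ℕ,
    ∀ x y : X, dist x y < δ →
      ∃ l' : ℕ, l' ≤ l ∧ ∃ c : Fin (l' + 1) → X, IsEtaChain η l' c x y ∧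
        ∀ i j : Fin (l' + 1), dist (c i) (c j) < ε

/-- Auxiliary chain-building lemma. -/
theorem aux_chain {X : Type*} [MetricSpace X] {ω : ℝ → ℝ} {C : Set X}
    (hmono : MonotoneOn ω (Set.Ioi (0:ℝ)))
    (hco : ∀ x ∈ C, ∀ y ∈ C, ∀ s t : ℝ, 0 < s → 0 < t → dist x y < ω (s + t) →
      ∃ z ∈ C, dist x z < ω s ∧ dist z y < ω t) :
    ∀ n : ℕ, ∀ u : ℝ, 0 < u → ∀ x ∈ C, ∀ y ∈ C, dist x y < ω ((n + 1) * u) →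
      ∃ c : Fin (n + 1 + 1) → X,
        (c 0 = x ∧ c (Fin.last (n+1)) = y ∧
          ∀ i : Fin (n+1), dist (c i.castSucc) (c i.succ) < ω u) ∧
        ∀ i, dist (c i) y < ω ((n + 1) * u) := by
  intro n
  induction n with
  | zero =>
    intro u hu x hx y hy hxy
    refine ⟨![x, y], ⟨rfl, rfl, ?_⟩, ?_⟩
    · intro i
      fin_cases i
      have : dist x y < ω u := by push_cast at hxy; simpa using hxy
      simpa using this
    · intro i
      fin_cases i
      · simpa using hxy
      · have : (0:ℝ) < ω (((0:ℕ)+1)*u) := lt_of_le_of_lt dist_nonneg hxy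
        simpa using this
  | succ n ih =>
    intro u hu x hx y hy hxy
    push_cast at hxy ⊢
    have hsum : ((n:ℝ) + 1 + 1) * u = u + ((n:ℝ) + 1) * u := by ring
    rw [hsum] at hxy
    obtain ⟨z, hz, hxz, hzy⟩ := hco x hx y hy u (((n:ℝ)+1)*u) hu (by positivity) hxy
    obtain ⟨c', ⟨hc0, hcl, hstep⟩, hnear⟩ := ih u hu z hz y hy hzy
    refine ⟨Fin.cons x c', ⟨?_, ?_, ?_⟩, ?_⟩
    · simp
    · rw [show Fin.last (n+1+1) = (Fin.last (n+1)).succ from rfl, Fin.cons_succ]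
      exact hcl
    · intro i
      refine Fin.cases ?_ ?_ i
      · have h1 : ((0 : Fin (n+1+1)).succ : Fin (n+1+1+1)) = (0 : Fin (n+1+1)).succ := rfl
        rw [Fin.castSucc_zero, Fin.cons_zero]
        rw [show ((0 : Fin (n+1+1)).succ) = Fin.succ 0 from rfl, Fin.cons_succ, hc0]
        exact hxz
      · intro j
        have e1 : (j.succ).castSucc = (j.castSucc).succ := by
          exact Fin.ext rfl
        rw [e1, Fin.cons_succ, show (j.succ).succ = Fin.succ j.succ from rfl, Fin.cons_succ]
        exact hstep j
    · intro i
      refine Fin.cases ?_ ?_ i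
      · rw [Fin.cons_zero]
        rw [← hsum] at hxy
        exact hxy
      · intro j
        rw [Fin.cons_succ]
        refine lt_of_lt_of_le (hnear j) (hmono ?_ ?_ ?_)
        · exact Set.mem_Ioi.mpr (by positivity)
        · exact Set.mem_Ioi.mpr (by positivity)
        · nlinarith [hu]

/-- If `X` is chain connected im kleinen and its metric is `ω`-convex on each chain
connected component for some continuity modulus `ω`, then `X` is uniformly locally
chain equi-connected. -/
theorem cik_omegaConvex_implies_ulcec {X : Type*} [MetricSpace X]
    (hcik : ChainConnectedImKleinen X)
    (hconv : ∃ ω : ℝ → ℝ, ContinuityModulus ω ∧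
      ∀ x₀ : X, OmegaConvexOn ω (ChainComponent x₀)) :
    ULChainEquiConnected X := by
  obtain ⟨ε₀, hε₀, hlink⟩ := hcik
  obtain ⟨ω, ⟨hmono, hpos, htend⟩, hconvAll⟩ := hconv
  intro ε hε
  -- choose T > 0 with ω T < ε / 2
  obtain ⟨a, ha, haω⟩ := Metric.tendsto_nhdsWithin_nhds.mp htend (ε/2) (by positivity)
  set T : ℝ := a / 2 with hT
  have hTpos : 0 < T := by positivity
  have hωT : ω T < ε / 2 := by
    have := haω (Set.mem_Ioi.mpr hTpos) (by
      rw [Real.dist_eq, sub_zero, abs_of_pos hTpos]; linarith)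
    rw [Real.dist_eq, sub_zero] at this
    exact lt_of_le_of_lt (le_abs_self _) this
  have hωTpos : 0 < ω T := hpos T hTpos
  refine ⟨min ε₀ (ω T), lt_min hε₀ hωTpos, ?_⟩
  intro η hη
  -- choose m with ω (T / (m+1)) < η
  obtain ⟨b, hb, hbω⟩ := Metric.tendsto_nhdsWithin_nhds.mp htend η hη
  obtain ⟨m, hm⟩ := exists_nat_gt (T / b)
  set u : ℝ := T / (m + 1) with hu
  have hupos : 0 < u := by positivity
  have huT : (↑m + 1) * u = T := by
    rw [hu]; field_simp
  have hub : u < b := by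
    rw [hu, div_lt_iff₀ (by positivity)]
    have h1 : T / b < (m : ℝ) + 1 := lt_of_lt_of_le hm (by linarith)
    nlinarith [mul_lt_mul_of_pos_right h1 hb, div_mul_cancel₀ T (ne_of_gt hb)]
  have hωu : ω u < η := by
    have := hbω (Set.mem_Ioi.mpr hupos) (by
      rw [Real.dist_eq, sub_zero, abs_of_pos hupos]; exact hub)
    rw [Real.dist_eq, sub_zero] at this
    exact lt_of_le_of_lt (le_abs_self _) this
  refine ⟨m + 1, ?_⟩
  intro x y hxy
  have hyC : y ∈ ChainComponent x := hlink x y (lt_of_lt_of_le hxy (min_le_left _ _))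
  have hxC : x ∈ ChainComponent x := by
    intro η' hη'
    exact ⟨0, fun _ => x, rfl, rfl, fun i => i.elim0⟩
  have hdist : dist x y < ω ((↑m + 1) * u) := by
    rw [huT]; exact lt_of_lt_of_le hxy (min_le_right _ _)
  obtain ⟨c, ⟨hc0, hcl, hstep⟩, hnear⟩ :=
    aux_chain hmono (hconvAll x) m u hupos x hxC y hyC hdist
  rw [huT] at hnear
  refine ⟨m + 1, le_refl _, c, ⟨hc0, hcl, fun i => lt_trans (hstep i) hωu⟩, ?_⟩
  intro i j
  calc dist (c i) (c j) ≤ dist (c i) y + dist (c j) y := dist_triangle_right _ _ _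
  _ < ω T + ω T := add_lt_add (hnear i) (hnear j)
  _ < ε := by linarith
end

section
/- A metric space (M,d) is uniformly locally path connected provided there is a dense subset D ⊂ M such that for every ε > 0 there is δ > 0 such that any two points x, y ∈ D with d(x,y) < δ can be linked by a continuous path f : [0,1] → M of diameter < ε with f(0) = x, f(1) = y. -/
open Set

/-- Gluing: a function continuous on two closed sets is continuous on their union. -/
lemma ulpc_aux_union {X Y : Type*} [TopologicalSpace X] [TopologicalSpace Y] {f : X → Y}
    {s t : Set X} (hs : IsClosed s) (ht : IsClosed t)
    (hfs : ContinuousOn f s) (hft : ContinuousOn f t) : ContinuousOn f (s ∪ t) := by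
  intro x hx
  have aux : ∀ (u : Set X), IsClosed u → ContinuousOn f u → ContinuousWithinAt f u x := by
    intro u hu hfu
    by_cases hxu : x ∈ u
    · exact hfu x hxu
    · exact continuousWithinAt_of_notMem_closure (by rwa [hu.closure_eq])
  exact (aux s hs hfs).union (aux t ht hft)

/-- Gluing two paths at a point. -/
lemma ulpc_aux_glue {M : Type*} [MetricSpace M] {f g : ℝ → M} {a b c : ℝ}
    (hab : a ≤ b) (hbc : b ≤ c)
    (hf : ContinuousOn f (Icc a b)) (hg : ContinuousOn g (Icc b c)) (heq : f b = g b) :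
    ContinuousOn (fun t => if t ≤ b then f t else g t) (Icc a c) := by
  rw [← Icc_union_Icc_eq_Icc hab hbc]
  apply ulpc_aux_union isClosed_Icc isClosed_Icc
  · exact hf.congr fun t htp => if_pos htp.2
  · apply hg.congr
    intro t htp
    by_cases hle : t ≤ b
    · have h' : t = b := le_antisymm hle htp.1
      simp [hle, h', heq]
    · simp [hle]

/-- The infinite concatenation ("tail") lemma: a sequence of paths whose endpoints
converge to `x`, with geometrically decaying diameters, can be concatenated with `x`
appended, yielding a path from `x` to `a 0`. -/
lemma ulpc_aux_tail {M : Type*} [MetricSpace M] (x : M) (a : ℕ → M) (p : ℕ → ℝ → M)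
    (E : ℝ) (hE : 0 < E)
    (hc : ∀ n, ContinuousOn (p n) (Icc 0 1))
    (h0 : ∀ n, p n 0 = a (n + 1)) (h1 : ∀ n, p n 1 = a n)
    (hdiam : ∀ n, ∀ s ∈ Icc (0:ℝ) 1, ∀ t ∈ Icc (0:ℝ) 1, dist (p n s) (p n t) < E / 2 ^ n)
    (hax : ∀ n, dist (a n) x < E / 2 ^ n) :
    ∃ g : ℝ → M, ContinuousOn g (Icc 0 1) ∧ g 0 = x ∧ g 1 = a 0 ∧
      ∀ t ∈ Icc (0:ℝ) 1, dist (g t) x < 2 * E := by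
  classical
  set c : ℕ → ℝ := fun n => ((2:ℝ) ^ n)⁻¹ with hcdef
  have hcpos : ∀ n, 0 < c n := fun n => by positivity
  have hcanti : ∀ {m k : ℕ}, m ≤ k → c k ≤ c m := by
    intro m k hmk
    have : (2:ℝ) ^ m ≤ 2 ^ k := by gcongr; norm_num
    exact inv_anti₀ (by positivity) this
  have hcmono : ∀ n, c (n + 1) < c n := by
    intro n
    have : (2:ℝ) ^ n < 2 ^ (n + 1) := by
      rw [pow_succ]
      nlinarith [pow_pos (by norm_num : (0:ℝ) < 2) n]
    exact inv_strictAnti₀ (by positivity) this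
  have hcle1 : ∀ n, c n ≤ 1 := by
    intro n
    have := hcanti (Nat.zero_le n)
    simpa [hcdef] using this
  set N : ℝ → ℕ := fun t => ⌊Real.logb 2 t⁻¹⌋₊ with hNdef
  set g : ℝ → M := fun t => if ht : 0 < t then p (N t) ((2:ℝ) ^ (N t + 1) * t - 1) else x
    with hgdef
  -- Key A : every t ∈ (0,1] lies in the piece indexed by N t
  have keyA : ∀ t : ℝ, 0 < t → t ≤ 1 → c (N t + 1) < t ∧ t ≤ c (N t) := by
    intro t h0t h1t
    have hti : (0:ℝ) < t⁻¹ := by positivity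
    have hti1 : (1:ℝ) ≤ t⁻¹ := (one_le_inv₀ h0t).mpr h1t
    have hlog0 : 0 ≤ Real.logb 2 t⁻¹ := Real.logb_nonneg one_lt_two hti1
    have hf1 : ((N t : ℝ)) ≤ Real.logb 2 t⁻¹ := Nat.floor_le hlog0
    have hf2 : Real.logb 2 t⁻¹ < (N t : ℝ) + 1 := Nat.lt_floor_add_one _
    have hlow : (2:ℝ) ^ (N t) ≤ t⁻¹ := by
      have := (Real.le_logb_iff_rpow_le one_lt_two hti).mp hf1
      rwa [Real.rpow_natCast] at this
    have hhigh : t⁻¹ < (2:ℝ) ^ (N t + 1) := by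
      have := (Real.logb_lt_iff_lt_rpow one_lt_two hti).mp hf2
      have h2 : ((N t : ℝ) + 1) = ((N t + 1 : ℕ) : ℝ) := by push_cast; ring
      rwa [h2, Real.rpow_natCast] at this
    constructor
    · simp only [hcdef]
      rw [← one_div, div_lt_iff₀ (by positivity)]
      have := mul_lt_mul_of_pos_right hhigh h0t
      rw [inv_mul_cancel₀ (ne_of_gt h0t)] at this
      linarith
    · simp only [hcdef]
      rw [← one_div, le_div_iff₀ (by positivity)]
      have := mul_le_mul_of_nonneg_right hlow (le_of_lt h0t)
      rw [inv_mul_cancel₀ (ne_of_gt h0t)] at this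
      linarith
  -- Key B : the index of points of a piece
  have keyB : ∀ (n : ℕ) (t : ℝ), c (n + 1) < t → t ≤ c n → N t = n := by
    intro n t hlo hhi
    have h0t : 0 < t := lt_trans (hcpos (n + 1)) hlo
    have hti : (0:ℝ) < t⁻¹ := by positivity
    have hlow : (2:ℝ) ^ n ≤ t⁻¹ := by
      simp only [hcdef] at hhi
      rw [← one_div, le_div_iff₀ (by positivity)] at hhi
      calc (2:ℝ) ^ n = (t * 2 ^ n) * t⁻¹ := by rw [mul_comm t, mul_assoc, mul_inv_cancel₀ (ne_of_gt h0t), mul_one]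
        _ ≤ 1 * t⁻¹ := by gcongr
        _ = t⁻¹ := one_mul _
    have hhigh : t⁻¹ < (2:ℝ) ^ (n + 1) := by
      simp only [hcdef] at hlo
      rw [← one_div, div_lt_iff₀ (by positivity)] at hlo
      calc t⁻¹ = (1 : ℝ) * t⁻¹ := (one_mul _).symm
        _ < (2 ^ (n+1) * t) * t⁻¹ := mul_lt_mul_of_pos_right (by linarith) hti
        _ = 2 ^ (n+1) := by rw [mul_assoc, mul_inv_cancel₀ (ne_of_gt h0t), mul_one]
    have hl : (n : ℝ) ≤ Real.logb 2 t⁻¹ := by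
      rw [Real.le_logb_iff_rpow_le one_lt_two hti, Real.rpow_natCast]; exact hlow
    have hh : Real.logb 2 t⁻¹ < (n : ℝ) + 1 := by
      rw [Real.logb_lt_iff_lt_rpow one_lt_two hti]
      have h2 : ((n : ℝ) + 1) = ((n + 1 : ℕ) : ℝ) := by push_cast; ring
      rw [h2, Real.rpow_natCast]; exact hhigh
    have hnn : 0 ≤ Real.logb 2 t⁻¹ := le_trans (by positivity) hl
    rw [hNdef]
    rw [Nat.floor_eq_iff hnn]
    exact ⟨hl, by exact_mod_cast hh⟩
  -- Key C : formula on pieces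
  have keyC : ∀ (n : ℕ) (t : ℝ), c (n + 1) < t → t ≤ c n →
      g t = p n ((2:ℝ) ^ (n + 1) * t - 1) := by
    intro n t hlo hhi
    have h0t : 0 < t := lt_trans (hcpos (n + 1)) hlo
    have hN : N t = n := keyB n t hlo hhi
    simp only [hgdef, dif_pos h0t, hN]
  -- parameters stay in [0,1] on pieces
  have keyS : ∀ (n : ℕ) (t : ℝ), c (n + 1) ≤ t → t ≤ c n →
      (2:ℝ) ^ (n + 1) * t - 1 ∈ Icc (0:ℝ) 1 := by
    intro n t hlo hhi
    have hp1 : (0:ℝ) < 2 ^ (n + 1) := by positivity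
    have h1' : (1:ℝ) ≤ 2 ^ (n + 1) * t := by
      have := mul_le_mul_of_nonneg_left hlo (le_of_lt hp1)
      simp only [hcdef] at this
      rw [mul_inv_cancel₀ (ne_of_gt hp1)] at this
      linarith
    have h2' : (2:ℝ) ^ (n + 1) * t ≤ 2 := by
      have hpn : (0:ℝ) < 2 ^ n := by positivity
      have := mul_le_mul_of_nonneg_left hhi (le_of_lt hpn)
      simp only [hcdef] at this
      rw [mul_inv_cancel₀ (ne_of_gt hpn)] at this
      calc (2:ℝ) ^ (n + 1) * t = 2 * (2 ^ n * t) := by rw [pow_succ]; ring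
        _ ≤ 2 * 1 := by linarith
        _ = 2 := by norm_num
    constructor <;> [linarith; linarith]
  -- value of g at left endpoints of pieces
  have keyEnd : ∀ n : ℕ, g (c (n + 1)) = a (n + 1) := by
    intro n
    have h := keyC (n + 1) (c (n + 1)) (hcmono (n + 1)) le_rfl
    have hval : (2:ℝ) ^ (n + 1 + 1) * c (n + 1) - 1 = 1 := by
      simp only [hcdef]
      have h2ne : ((2:ℝ) ^ (n + 1)) ≠ 0 := by positivity
      rw [pow_succ]
      field_simp
      try norm_num
    rw [h, hval, h1]
  -- piece continuity
  have keyD : ∀ n : ℕ, ContinuousOn g (Icc (c (n + 1)) (c n)) := by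
    intro n
    apply ContinuousOn.congr
      (f := fun t => p n ((2:ℝ) ^ (n + 1) * t - 1))
    · apply (hc n).comp
      · exact (continuous_const.mul continuous_id').sub continuous_const |>.continuousOn
      · intro t ht
        exact keyS n t ht.1 ht.2
    · intro t ht
      rcases eq_or_lt_of_le ht.1 with heq | hlt
      · have h₁ : g t = a (n + 1) := by rw [← heq]; exact keyEnd n
        have hval : (2:ℝ) ^ (n + 1) * t - 1 = 0 := by
          rw [← heq]
          simp only [hcdef]
          field_simp
          norm_num
        show g t = p n ((2:ℝ) ^ (n + 1) * t - 1)
        rw [h₁, hval, h0]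
      · exact keyC n t hlt ht.2
  -- value bound
  have keyE : ∀ t : ℝ, 0 < t → t ≤ 1 → dist (g t) x < 2 * E / 2 ^ (N t) := by
    intro t h0t h1t
    obtain ⟨hlo, hhi⟩ := keyA t h0t h1t
    have hgt := keyC (N t) t hlo hhi
    have hs := keyS (N t) t (le_of_lt hlo) hhi
    have hd1 : dist (p (N t) ((2:ℝ) ^ (N t + 1) * t - 1)) (p (N t) 1) < E / 2 ^ (N t) :=
      hdiam (N t) _ hs 1 (by constructor <;> norm_num)
    have hd2 : dist (a (N t)) x < E / 2 ^ (N t) := hax (N t)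
    rw [h1] at hd1
    calc dist (g t) x ≤ dist (g t) (a (N t)) + dist (a (N t)) x := dist_triangle _ _ _
      _ < E / 2 ^ (N t) + E / 2 ^ (N t) := by rw [hgt]; exact add_lt_add hd1 hd2
      _ = 2 * E / 2 ^ (N t) := by ring
  -- continuity on [c n, 1] by induction
  have ind : ∀ n : ℕ, ContinuousOn g (Icc (c n) 1) := by
    intro n
    induction n with
    | zero =>
      have : c 0 = 1 := by simp [hcdef]
      rw [this, Icc_self]
      exact continuousOn_singleton g 1
    | succ k ih =>
      have := ulpc_aux_union (f := g) isClosed_Icc isClosed_Icc (keyD k) ih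
      rwa [Icc_union_Icc_eq_Icc (le_of_lt (hcmono k)) (hcle1 k)] at this
  have hg0 : g 0 = x := by simp [hgdef]
  have hg1 : g 1 = a 0 := by
    have hlt : c (0 + 1) < 1 := by simp only [hcdef]; norm_num
    have hle : (1:ℝ) ≤ c 0 := by simp only [hcdef]; norm_num
    have h := keyC 0 1 hlt hle
    rw [h, show (2:ℝ) ^ (0 + 1) * 1 - 1 = 1 by norm_num, h1]
  refine ⟨g, ?_, hg0, hg1, ?_⟩
  · -- continuity on [0,1]
    intro t ht
    rcases eq_or_lt_of_le ht.1 with heq | h0t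
    · -- t = 0
      rw [← heq]
      rw [Metric.continuousWithinAt_iff]
      intro ε' hε'
      obtain ⟨N0, hN0⟩ := exists_pow_lt_of_lt_one
        (show (0:ℝ) < ε' / (2 * E) by positivity) (show (2:ℝ)⁻¹ < 1 by norm_num)
      have hN0' : 2 * E / 2 ^ N0 < ε' := by
        rw [inv_pow] at hN0
        rw [div_lt_iff₀ (by positivity : (0:ℝ) < 2 ^ N0)]
        rw [inv_lt_iff_one_lt_mul₀ (by positivity)] at hN0
        calc 2 * E = 2 * E * 1 := by ring
          _ < 2 * E * (ε' / (2 * E) * 2 ^ N0) := (mul_lt_mul_iff_right₀ (by positivity : (0:ℝ) < 2 * E)).mpr hN0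
          _ = ε' * 2 ^ N0 := by field_simp
      refine ⟨c N0, hcpos N0, ?_⟩
      intro u hu hdu
      rcases eq_or_lt_of_le hu.1 with hequ | h0u
      · rw [← hequ, hg0]; simpa [hg0] using hε'
      · have hbound := keyE u h0u hu.2
        have hlt : u < c N0 := by
          have : dist u 0 = u := by rw [Real.dist_eq, sub_zero, abs_of_pos h0u]
          rwa [this] at hdu
        have hNu : N0 ≤ N u := by
          by_contra hcon
          push_neg at hcon
          have : c N0 ≤ c (N u + 1) := hcanti hcon
          have := (keyA u h0u hu.2).1
          linarith
        have hpow : (2:ℝ) ^ N0 ≤ 2 ^ (N u) := by gcongr; norm_num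
        have : 2 * E / 2 ^ (N u) ≤ 2 * E / 2 ^ N0 :=
          div_le_div_of_nonneg_left (by positivity) (by positivity) hpow
        rw [hg0]
        calc dist (g u) x < 2 * E / 2 ^ (N u) := hbound
          _ ≤ 2 * E / 2 ^ N0 := this
          _ < ε' := hN0'
    · -- t > 0
      obtain ⟨n, hn⟩ : ∃ n, c n < t := by
        obtain ⟨n, hn⟩ := exists_pow_lt_of_lt_one h0t (show (2:ℝ)⁻¹ < 1 by norm_num)
        exact ⟨n, by simp only [hcdef]; rwa [← inv_pow]⟩
      have hmem : t ∈ Icc (c n) 1 := ⟨le_of_lt hn, ht.2⟩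
      have hct : ContinuousWithinAt g (Icc (c n) 1) t := ind n t hmem
      apply hct.mono_of_mem_nhdsWithin
      rw [mem_nhdsWithin]
      exact ⟨Ioi (c n), isOpen_Ioi, hn, fun u hu => ⟨le_of_lt hu.1, hu.2.2⟩⟩
  · -- value bound
    intro t ht
    rcases eq_or_lt_of_le ht.1 with heq | h0t
    · rw [← heq, hg0]
      simpa using (by positivity : (0:ℝ) < 2 * E)
    · have := keyE t h0t ht.2
      have h2 : 2 * E / 2 ^ (N t) ≤ 2 * E := by
        apply div_le_self (by positivity)
        exact one_le_pow₀ (by norm_num)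
      linarith

/-- If a metric space `M` has a dense subset `D` such that for every `ε > 0` there is
`δ > 0` such that any two `δ`-close points of `D` are linked by a path in `M` of
diameter `< ε`, then `M` is uniformly locally path connected. -/
theorem dense_paths_implies_ulpc {M : Type*} [MetricSpace M] (D : Set M)
    (hD : Dense D)
    (h : ∀ ε : ℝ, 0 < ε → ∃ δ : ℝ, 0 < δ ∧ ∀ x ∈ D, ∀ y ∈ D, dist x y < δ →
      ∃ f : ℝ → M, ContinuousOn f (Icc 0 1) ∧ f 0 = x ∧ f 1 = y ∧
        ∀ s ∈ Icc (0:ℝ) 1, ∀ t ∈ Icc (0:ℝ) 1, dist (f s) (f t) < ε) :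
    ∀ ε : ℝ, 0 < ε → ∃ δ : ℝ, 0 < δ ∧ ∀ x y : M, dist x y < δ →
      ∃ f : ℝ → M, ContinuousOn f (Icc 0 1) ∧ f 0 = x ∧ f 1 = y ∧
        ∀ s ∈ Icc (0:ℝ) 1, ∀ t ∈ Icc (0:ℝ) 1, dist (f s) (f t) < ε := by
  classical
  intro ε hε
  set E : ℝ := ε / 8 with hEdef
  have hE : 0 < E := by positivity
  have H : ∀ n : ℕ, ∃ δ : ℝ, 0 < δ ∧ ∀ x ∈ D, ∀ y ∈ D, dist x y < δ →
      ∃ f : ℝ → M, ContinuousOn f (Icc 0 1) ∧ f 0 = x ∧ f 1 = y ∧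
        ∀ s ∈ Icc (0:ℝ) 1, ∀ t ∈ Icc (0:ℝ) 1, dist (f s) (f t) < E / 2 ^ (n + 1) :=
    fun n => h (E / 2 ^ (n + 1)) (by positivity)
  choose δ' hδ'pos hδ'spec using H
  obtain ⟨δ'', hδ''pos, hδ''spec⟩ := h E hE
  set η : ℕ → ℝ := fun n => Nat.rec (motive := fun _ => ℝ)
    (min ((min (δ' 0) δ'') / 3) (E / 2))
    (fun k ih => min (ih / 2) ((min (δ' k) (δ' (k + 1))) / 3)) n with hηdef
  have hη0 : η 0 = min ((min (δ' 0) δ'') / 3) (E / 2) := rfl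
  have hηsucc : ∀ n, η (n + 1) = min (η n / 2) ((min (δ' n) (δ' (n + 1))) / 3) := fun n => rfl
  have hηpos : ∀ n, 0 < η n := by
    intro n
    induction n with
    | zero =>
      rw [hη0]
      apply lt_min
      · apply div_pos (lt_min (hδ'pos 0) hδ''pos); norm_num
      · positivity
    | succ k ih =>
      rw [hηsucc]
      apply lt_min
      · positivity
      · apply div_pos (lt_min (hδ'pos k) (hδ'pos (k + 1))); norm_num
  have hηE : ∀ n, η n ≤ E / 2 ^ (n + 1) := by
    intro n
    induction n with
    | zero => rw [hη0]; simpa using min_le_right _ _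
    | succ k ih =>
      rw [hηsucc]
      calc min (η k / 2) ((min (δ' k) (δ' (k + 1))) / 3) ≤ η k / 2 := min_le_left _ _
        _ ≤ (E / 2 ^ (k + 1)) / 2 := by linarith
        _ = E / 2 ^ (k + 2) := by rw [pow_succ]; ring
  have hηδ : ∀ n, η n ≤ δ' n / 3 := by
    intro n
    cases n with
    | zero =>
      rw [hη0]
      calc min ((min (δ' 0) δ'') / 3) (E / 2) ≤ (min (δ' 0) δ'') / 3 := min_le_left _ _
        _ ≤ δ' 0 / 3 := by have := min_le_left (δ' 0) δ''; linarith
    | succ k =>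
      rw [hηsucc]
      calc min (η k / 2) ((min (δ' k) (δ' (k + 1))) / 3) ≤ (min (δ' k) (δ' (k + 1))) / 3 :=
            min_le_right _ _
        _ ≤ δ' (k + 1) / 3 := by have := min_le_right (δ' k) (δ' (k + 1)); linarith
  have hηδ' : ∀ n, η (n + 1) ≤ δ' n / 3 := by
    intro n
    rw [hηsucc]
    calc min (η n / 2) ((min (δ' n) (δ' (n + 1))) / 3) ≤ (min (δ' n) (δ' (n + 1))) / 3 :=
          min_le_right _ _
      _ ≤ δ' n / 3 := by have := min_le_left (δ' n) (δ' (n + 1)); linarith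
  have hηδ'' : η 0 ≤ δ'' / 3 := by
    rw [hη0]
    calc min ((min (δ' 0) δ'') / 3) (E / 2) ≤ (min (δ' 0) δ'') / 3 := min_le_left _ _
      _ ≤ δ'' / 3 := by have := min_le_right (δ' 0) δ''; linarith
  refine ⟨η 0, hηpos 0, ?_⟩
  intro x y hxy
  -- approximating sequences in D
  have haex : ∀ n : ℕ, ∃ z ∈ D, dist x z < η n := fun n => hD.exists_dist_lt x (hηpos n)
  have hbex : ∀ n : ℕ, ∃ z ∈ D, dist y z < η n := fun n => hD.exists_dist_lt y (hηpos n)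
  choose a haD hax using haex
  choose b hbD hby using hbex
  -- paths between consecutive a's
  have hpa : ∀ n : ℕ, dist (a (n + 1)) (a n) < δ' n := by
    intro n
    calc dist (a (n + 1)) (a n) ≤ dist (a (n + 1)) x + dist x (a n) := dist_triangle _ _ _
      _ = dist x (a (n + 1)) + dist x (a n) := by rw [dist_comm]
      _ < η (n + 1) + η n := add_lt_add (hax (n + 1)) (hax n)
      _ ≤ δ' n / 3 + δ' n / 3 := add_le_add (hηδ' n) (hηδ n)
      _ < δ' n := by have := hδ'pos n; linarith
  have hpb : ∀ n : ℕ, dist (b (n + 1)) (b n) < δ' n := by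
    intro n
    calc dist (b (n + 1)) (b n) ≤ dist (b (n + 1)) y + dist y (b n) := dist_triangle _ _ _
      _ = dist y (b (n + 1)) + dist y (b n) := by rw [dist_comm]
      _ < η (n + 1) + η n := add_lt_add (hby (n + 1)) (hby n)
      _ ≤ δ' n / 3 + δ' n / 3 := add_le_add (hηδ' n) (hηδ n)
      _ < δ' n := by have := hδ'pos n; linarith
  have hp : ∀ n : ℕ, ∃ f : ℝ → M, ContinuousOn f (Icc 0 1) ∧ f 0 = a (n + 1) ∧ f 1 = a n ∧
      ∀ s ∈ Icc (0:ℝ) 1, ∀ t ∈ Icc (0:ℝ) 1, dist (f s) (f t) < E / 2 ^ (n + 1) :=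
    fun n => hδ'spec n (a (n + 1)) (haD (n + 1)) (a n) (haD n) (hpa n)
  have hq : ∀ n : ℕ, ∃ f : ℝ → M, ContinuousOn f (Icc 0 1) ∧ f 0 = b (n + 1) ∧ f 1 = b n ∧
      ∀ s ∈ Icc (0:ℝ) 1, ∀ t ∈ Icc (0:ℝ) 1, dist (f s) (f t) < E / 2 ^ (n + 1) :=
    fun n => hδ'spec n (b (n + 1)) (hbD (n + 1)) (b n) (hbD n) (hpb n)
  choose p hpc hp0 hp1 hpd using hp
  choose q hqc hq0 hq1 hqd using hq
  have hhalf : ∀ n : ℕ, (E : ℝ) / 2 ^ (n + 1) ≤ E / 2 ^ n := by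
    intro n
    have hnn : (0:ℝ) ≤ E / 2 ^ n := by positivity
    calc (E : ℝ) / 2 ^ (n + 1) = (E / 2 ^ n) / 2 := by rw [pow_succ]; ring
      _ ≤ E / 2 ^ n := by linarith
  -- tails
  obtain ⟨gx, hgxc, hgx0, hgx1, hgxb⟩ := ulpc_aux_tail x a p E hE hpc hp0 hp1
    (fun n s hs t ht => lt_of_lt_of_le (hpd n s hs t ht) (hhalf n))
    (fun n => lt_of_lt_of_le (by rw [dist_comm]; exact hax n)
      (le_trans (hηE n) (hhalf n)))
  obtain ⟨gy, hgyc, hgy0, hgy1, hgyb⟩ := ulpc_aux_tail y b q E hE hqc hq0 hq1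
    (fun n s hs t ht => lt_of_lt_of_le (hqd n s hs t ht) (hhalf n))
    (fun n => lt_of_lt_of_le (by rw [dist_comm]; exact hby n)
      (le_trans (hηE n) (hhalf n)))
  -- middle path
  have hab0 : dist (a 0) (b 0) < δ'' := by
    calc dist (a 0) (b 0) ≤ dist (a 0) x + dist x y + dist y (b 0) := dist_triangle4 _ _ _ _
      _ = dist x (a 0) + dist x y + dist y (b 0) := by rw [dist_comm (a 0) x]
      _ < η 0 + η 0 + η 0 := by
          have h1 := hax 0
          have h2 := hby 0
          linarith
      _ ≤ δ'' := by have := hηδ''; linarith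
  obtain ⟨r, hrc, hr0, hr1, hrd⟩ := hδ''spec (a 0) (haD 0) (b 0) (hbD 0) hab0
  -- assemble
  set f : ℝ → M := fun t =>
    if t ≤ 1/4 then gx (4 * t) else if t ≤ 3/4 then r (2 * t - 1/2) else gy (4 - 4 * t)
    with hfdef
  have hP1 : ContinuousOn (fun t : ℝ => gx (4 * t)) (Icc 0 (1/4)) := by
    apply hgxc.comp (continuous_const.mul continuous_id').continuousOn
    intro t ht
    simp only [mem_Icc, Pi.mul_apply, Pi.sub_apply] at ht ⊢
    constructor <;> linarith [ht.1, ht.2]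
  have hP2 : ContinuousOn (fun t : ℝ => r (2 * t - 1/2)) (Icc (1/4) (3/4)) := by
    apply hrc.comp ((continuous_const.mul continuous_id').sub continuous_const).continuousOn
    intro t ht
    simp only [mem_Icc, Pi.mul_apply, Pi.sub_apply] at ht ⊢
    constructor <;> linarith [ht.1, ht.2]
  have hP3 : ContinuousOn (fun t : ℝ => gy (4 - 4 * t)) (Icc (3/4) 1) := by
    apply hgyc.comp (continuous_const.sub (continuous_const.mul continuous_id')).continuousOn
    intro t ht
    simp only [mem_Icc, Pi.mul_apply, Pi.sub_apply] at ht ⊢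
    constructor <;> linarith [ht.1, ht.2]
  have hInner : ContinuousOn
      (fun t : ℝ => if t ≤ 3/4 then r (2 * t - 1/2) else gy (4 - 4 * t)) (Icc (1/4) 1) := by
    apply ulpc_aux_glue (by norm_num) (by norm_num) hP2 hP3
    have e1 : (2:ℝ) * (3/4) - 1/2 = 1 := by norm_num
    have e2 : (4:ℝ) - 4 * (3/4) = 1 := by norm_num
    rw [e1, e2, hr1, hgy1]
  have hfc : ContinuousOn f (Icc 0 1) := by
    rw [hfdef]
    apply ulpc_aux_glue (by norm_num) (by norm_num) hP1 hInner
    have e1 : (4:ℝ) * (1/4) = 1 := by norm_num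
    have e2 : ((1:ℝ)/4) ≤ 3/4 := by norm_num
    simp only [e1, hgx1, if_pos e2]
    have e3 : (2:ℝ) * (1/4) - 1/2 = 0 := by norm_num
    rw [e3, hr0]
  have hf0 : f 0 = x := by
    simp only [hfdef]
    rw [if_pos (by norm_num : (0:ℝ) ≤ 1/4), mul_zero, hgx0]
  have hf1 : f 1 = y := by
    simp only [hfdef]
    rw [if_neg (by norm_num : ¬ ((1:ℝ) ≤ 1/4)), if_neg (by norm_num : ¬ ((1:ℝ) ≤ 3/4))]
    norm_num [hgy0]
  -- value bound : every point of f is within 3E of x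
  have hfb : ∀ s ∈ Icc (0:ℝ) 1, dist (f s) x < 3 * E := by
    intro s hs
    simp only [hfdef]
    by_cases h1 : s ≤ 1/4
    · rw [if_pos h1]
      have := hgxb (4 * s) ⟨by linarith [hs.1], by linarith⟩
      linarith
    · rw [if_neg h1]
      push_neg at h1
      by_cases h2 : s ≤ 3/4
      · rw [if_pos h2]
        have hu : (2 * s - 1/2) ∈ Icc (0:ℝ) 1 := ⟨by linarith, by linarith⟩
        have hd1 : dist (r (2 * s - 1/2)) (r 0) < E :=
          hrd _ hu 0 ⟨le_rfl, by norm_num⟩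
        rw [hr0] at hd1
        have hd2 : dist (a 0) x < E := by
          rw [dist_comm]
          exact lt_of_lt_of_le (hax 0) (le_trans (hηE 0) (by
            have : (E:ℝ)/2^(0+1) = E/2 := by norm_num
            rw [this]; linarith))
        calc dist (r (2 * s - 1/2)) x ≤ dist (r (2 * s - 1/2)) (a 0) + dist (a 0) x :=
              dist_triangle _ _ _
          _ < E + E := add_lt_add hd1 hd2
          _ < 3 * E := by linarith
      · rw [if_neg h2]
        push_neg at h2
        have hu : (4 - 4 * s) ∈ Icc (0:ℝ) 1 := ⟨by linarith [hs.2], by linarith⟩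
        have hd1 : dist (gy (4 - 4 * s)) y < 2 * E := hgyb _ hu
        have hd2 : dist y x < E := by
          rw [dist_comm]
          exact lt_of_lt_of_le hxy (le_trans (hηE 0) (by
            have : (E:ℝ)/2^(0+1) = E/2 := by norm_num
            rw [this]; linarith))
        calc dist (gy (4 - 4 * s)) x ≤ dist (gy (4 - 4 * s)) y + dist y x := dist_triangle _ _ _
          _ < 2 * E + E := add_lt_add hd1 hd2
          _ = 3 * E := by ring
  refine ⟨f, hfc, hf0, hf1, ?_⟩
  intro s hs t ht
  have h1 := hfb s hs
  have h2 := hfb t ht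
  have : dist (f s) (f t) ≤ dist (f s) x + dist x (f t) := dist_triangle _ _ _
  rw [dist_comm x (f t)] at this
  have hEε : 6 * E < ε := by rw [hEdef]; linarith
  linarith
end
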